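/- Let G be an undirected graph on vertices {1,...,M} with neighborhood sets N_i (where i ∈ N_i and j ∈ N_i iff i ∈ N_j), and suppose each |N_i| ≥ 2. If real numbers Δβ_1,...,Δβ_M satisfy, for every i, the local constraint ∑_{j ∈ N_i \ {i}} Δβ_j / (|N_j| - 1) = 0, then ∑_{i=1}^M Δβ_i = 0. -/
import Mathlib


/-- If the local negotiation constraints hold on an undirected
graph (neighborhoods containing the vertex itself, each of size ≥ 2), then the
global sum of the Δβ is zero. -/
theorem stmt_0 (M : ℕ) (N : Fin M → Finset (Fin M))
    (hself : ∀ i, i ∈ N i)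
    (hsym : ∀ i j, j ∈ N i ↔ i ∈ N j)
    (hcard : ∀ i, 2 ≤ (N i).card)
    (Δβ : Fin M → ℝ)
    (hlocal : ∀ i, ∑ j ∈ (N i).erase i, Δβ j / (((N j).card : ℝ) - 1) = 0) :
    ∑ i, Δβ i = 0 := by
  set g : Fin M → ℝ := fun j => Δβ j / (((N j).card : ℝ) - 1) with hg
  have hne : ∀ j, (((N j).card : ℝ) - 1) ≠ 0 := by
    intro j
    have h2 := hcard j
    have : (2 : ℝ) ≤ ((N j).card : ℝ) := by exact_mod_cast h2
    linarith
  have key : ∑ i, Δβ i = ∑ i, ∑ j ∈ (N i).erase i, g j := by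
    have swap : ∑ i, ∑ j ∈ (N i).erase i, g j
        = ∑ j, ∑ i ∈ (N j).erase j, g j := by
      have h1 : ∀ i j : Fin M, (j ∈ (N i).erase i) ↔ (i ∈ (N j).erase j) := by
        intro i j
        simp only [Finset.mem_erase]
        constructor
        · rintro ⟨hne', hmem⟩
          exact ⟨fun h => hne' h.symm, (hsym i j).mp hmem⟩
        · rintro ⟨hne', hmem⟩
          exact ⟨fun h => hne' h.symm, (hsym i j).mpr hmem⟩
      calc ∑ i, ∑ j ∈ (N i).erase i, g j
          = ∑ i, ∑ j : Fin M, if j ∈ (N i).erase i then g j else 0 := by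
            apply Finset.sum_congr rfl; intro i _
            rw [Finset.sum_ite_mem, Finset.univ_inter]
        _ = ∑ j : Fin M, ∑ i : Fin M, if j ∈ (N i).erase i then g j else 0 :=
            Finset.sum_comm
        _ = ∑ j : Fin M, ∑ i : Fin M, if i ∈ (N j).erase j then g j else 0 := by
            apply Finset.sum_congr rfl; intro j _
            apply Finset.sum_congr rfl; intro i _
            simp only [h1 i j]
        _ = ∑ j, ∑ i ∈ (N j).erase j, g j := by
            apply Finset.sum_congr rfl; intro j _
            rw [Finset.sum_ite_mem, Finset.univ_inter]
    rw [swap]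
    apply Finset.sum_congr rfl
    intro j _
    rw [Finset.sum_const, Finset.card_erase_of_mem (hself j)]
    have hcge := hcard j
    have hcast : (((N j).card - 1 : ℕ) : ℝ) = ((N j).card : ℝ) - 1 := by
      have : 1 ≤ (N j).card := le_trans (by norm_num) hcge
      push_cast [this]
      ring
    rw [nsmul_eq_mul, hcast, hg]
    simp only [hg]
    rw [mul_div_cancel₀ _ (hne j)]
  rw [key]
  simp only [hlocal]
  simp
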